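/- Let u be the uniform distribution over the C(n,2) unordered qubit pairs and let p be a distribution on pairs with pointwise domination p(e) ≤ e^α u(e) for all e. For a Pauli string of weight w, the backflow probability under p-sampled uniform two-qubit Pauli gates satisfies p_bf(w) ≤ e^α·C(w,2) / (9·C(n,2) − 4e^α·w(3n − 2w − 1)), provided the denominator is positive. -/

import Mathlib

open scoped Classical

/-! Backflow bound for close-to-uniform all-to-all two-qubit Pauli gates.  The qubit
pair is sampled from a distribution `p` on unordered pairs dominated pointwise by
`e^α` times the uniform distribution `u(e) = 1/C(n,2)`; the non-identity two-qubit
Pauli on the sampled pair is uniform among the `9` options. -/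

/-- Sample space: a pair `i < j` of qubits and a non-identity Pauli on each. -/
abbrev GateSpG (n : ℕ) := {p : Fin n × Fin n // p.1 < p.2} × (Fin 3 × Fin 3)

/-- Encoding of a non-identity single-qubit Pauli into `Fin 4` (`0` codes identity). -/
def pcodeG : Fin 3 → Fin 4 := Fin.succ

/-- Weight of a Pauli string. -/
def pweightG {n : ℕ} (Q : Fin n → Fin 4) : ℕ :=
  (Finset.univ.filter fun i => Q i ≠ 0).card

/-- Number of gate sites where the gate Pauli and `Q` anticommute site-wise. -/
def anticountG {n : ℕ} (Q : Fin n → Fin 4) (ω : GateSpG n) : ℕ :=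
  (if Q ω.1.1.1 ≠ 0 ∧ Q ω.1.1.1 ≠ pcodeG ω.2.1 then 1 else 0) +
  (if Q ω.1.1.2 ≠ 0 ∧ Q ω.1.1.2 ≠ pcodeG ω.2.2 then 1 else 0)

/-- The gate commutes with `Q`. -/
def CommutesG {n : ℕ} (Q : Fin n → Fin 4) (ω : GateSpG n) : Prop :=
  Even (anticountG Q ω)

/-- The gate reduces the weight of `Q` by two. -/
def DecaysG {n : ℕ} (Q : Fin n → Fin 4) (ω : GateSpG n) : Prop :=
  pcodeG ω.2.1 = Q ω.1.1.1 ∧ pcodeG ω.2.2 = Q ω.1.1.2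

/-- Probability of an event when the pair is sampled from `p` and the two-site Pauli
uniformly among the `9` options. -/
noncomputable def prG (n : ℕ) (p : {e : Fin n × Fin n // e.1 < e.2} → ℝ)
    (Ev : GateSpG n → Prop) : ℝ :=
  ∑ ω : GateSpG n, if Ev ω then p ω.1 / 9 else 0


/-! Domination turns each probability into at most `e^α` times a uniform one, i.e. a count of
gates. A gate decays `Q` only if it equals `Q` on a pair inside the support (one Pauli for each
of the `C(w,2)` such pairs), and it anticommutes with `Q` for at most `6` of the `9` Paulis on a
pair meeting the support. Since `Pr_p(Commute) = 1 - Pr_p(Anticommute)`, the anticommutation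
count bounds the denominator from below. -/

open Finset

section OrderedPairs

variable {α : Type*} [Fintype α] [LinearOrder α]

theorem card_orderedPairs_filter_mem_and_mem (s : Finset α) :
    #{e : {x : α × α // x.1 < x.2} | e.1.1 ∈ s ∧ e.1.2 ∈ s} = (#s).choose 2 := by
  rw [← card_product_filter_lt, ← card_map (Function.Embedding.subtype _)]
  congr 1
  ext x
  simp

theorem card_orderedPairs_filter_not_mem_and_mem_add (s : Finset α) :
    #{e : {x : α × α // x.1 < x.2} | ¬(e.1.1 ∈ s ∧ e.1.2 ∈ s)} + (#s).choose 2 =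
      (Fintype.card α).choose 2 := by
  rw [← card_orderedPairs_filter_mem_and_mem, add_comm, card_filter_add_card_filter_not,
    card_univ, Fintype.card_subtype, Fintype.card_product_filter_lt]

end OrderedPairs

section Gates

variable {n : ℕ}

theorem card_decaysG_and_commutesG (Q : Fin n → Fin 4) (e : {x : Fin n × Fin n // x.1 < x.2}) :
    #{ab : Fin 3 × Fin 3 | DecaysG Q (e, ab) ∧ CommutesG Q (e, ab)} =
      if Q e.1.1 ≠ 0 ∧ Q e.1.2 ≠ 0 then 1 else 0 := by
  have key : ∀ q₁ q₂ : Fin 4,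
      #{ab : Fin 3 × Fin 3 | (pcodeG ab.1 = q₁ ∧ pcodeG ab.2 = q₂) ∧
        Even ((if q₁ ≠ 0 ∧ q₁ ≠ pcodeG ab.1 then 1 else 0) +
          (if q₂ ≠ 0 ∧ q₂ ≠ pcodeG ab.2 then 1 else 0))} =
      if q₁ ≠ 0 ∧ q₂ ≠ 0 then 1 else 0 := by
    unfold pcodeG; decide
  convert key (Q e.1.1) (Q e.1.2) <;> exact Iff.rfl

theorem card_not_commutesG_le (Q : Fin n → Fin 4) (e : {x : Fin n × Fin n // x.1 < x.2}) :
    #{ab : Fin 3 × Fin 3 | ¬CommutesG Q (e, ab)} ≤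
      if ¬(Q e.1.1 = 0 ∧ Q e.1.2 = 0) then 6 else 0 := by
  -- exactly 6 when one site lies in the support of `Q`, and 4 when both do
  have key : ∀ q₁ q₂ : Fin 4,
      #{ab : Fin 3 × Fin 3 | ¬Even ((if q₁ ≠ 0 ∧ q₁ ≠ pcodeG ab.1 then 1 else 0) +
          (if q₂ ≠ 0 ∧ q₂ ≠ pcodeG ab.2 then 1 else 0))} ≤
      if ¬(q₁ = 0 ∧ q₂ = 0) then 6 else 0 := by
    unfold pcodeG; decide
  convert key (Q e.1.1) (Q e.1.2); exact Iff.rfl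

theorem pweightG_add_card_filter_eq_zero (Q : Fin n → Fin 4) : pweightG Q + #{i | Q i = 0} = n := by
  simpa [pweightG] using card_filter_add_card_filter_not (s := univ) (fun i => Q i ≠ 0)

theorem sum_card_decaysG_and_commutesG (Q : Fin n → Fin 4) :
    ∑ e, #{ab : Fin 3 × Fin 3 | DecaysG Q (e, ab) ∧ CommutesG Q (e, ab)} = (pweightG Q).choose 2 := by
  simp_rw [card_decaysG_and_commutesG, ← card_filter]
  simpa [pweightG] using card_orderedPairs_filter_mem_and_mem {i | Q i ≠ 0}

theorem sum_card_not_commutesG_add_le (Q : Fin n → Fin 4) :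
    ∑ e, #{ab : Fin 3 × Fin 3 | ¬CommutesG Q (e, ab)} + 6 * (n - pweightG Q).choose 2 ≤
      6 * n.choose 2 := by
  have hzero : #{i | Q i = 0} = n - pweightG Q := by
    have := pweightG_add_card_filter_eq_zero Q
    omega
  calc ∑ e, #{ab : Fin 3 × Fin 3 | ¬CommutesG Q (e, ab)} + 6 * (n - pweightG Q).choose 2
      ≤ ∑ e : {x : Fin n × Fin n // x.1 < x.2}, (if ¬(Q e.1.1 = 0 ∧ Q e.1.2 = 0) then 6 else 0) +
          6 * (n - pweightG Q).choose 2 := by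
        gcongr with e; exact card_not_commutesG_le Q e
    _ = 6 * n.choose 2 := by
        rw [← sum_filter, sum_const, smul_eq_mul, ← hzero, mul_comm, ← mul_add]
        simpa using card_orderedPairs_filter_not_mem_and_mem_add {i | Q i = 0}

theorem sum_card_not_commutesG_le (Q : Fin n → Fin 4) :
    ((∑ e, #{ab : Fin 3 × Fin 3 | ¬CommutesG Q (e, ab)} : ℕ) : ℝ) ≤
      4 * pweightG Q * (3 * n - 2 * pweightG Q - 1) := by
  have hle : pweightG Q ≤ n := by
    have := pweightG_add_card_filter_eq_zero Q
    omega
  have hcount : ((∑ e, #{ab : Fin 3 × Fin 3 | ¬CommutesG Q (e, ab)} : ℕ) : ℝ) +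
      6 * ((n - pweightG Q).choose 2 : ℝ) ≤ 6 * (n.choose 2 : ℝ) := by
    exact_mod_cast sum_card_not_commutesG_add_le Q
  rw [Nat.cast_choose_two, Nat.cast_choose_two, Nat.cast_sub hle] at hcount
  have hwn : (pweightG Q : ℝ) ≤ n := by exact_mod_cast hle
  nlinarith [mul_nonneg (Nat.cast_nonneg (pweightG Q) : (0 : ℝ) ≤ pweightG Q) (sub_nonneg.2 hwn),
    Nat.cast_choose_two ℝ (pweightG Q), (Nat.cast_nonneg _ : (0 : ℝ) ≤ (pweightG Q).choose 2)]

variable (p : {x : Fin n × Fin n // x.1 < x.2} → ℝ)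

theorem prG_add_prG_not (Ev : GateSpG n → Prop) :
    prG n p Ev + prG n p (fun ω => ¬Ev ω) = ∑ e, p e := by
  calc prG n p Ev + prG n p (fun ω => ¬Ev ω) = ∑ ω : GateSpG n, p ω.1 / 9 := by
        rw [prG, prG, ← sum_add_distrib]
        exact sum_congr rfl fun ω _ => by split_ifs <;> simp_all
    _ = ∑ e, p e := by simp [Fintype.sum_prod_type, mul_div_cancel₀]

theorem prG_le_of_le {c : ℝ} (hpc : ∀ e, p e ≤ c) (Ev : GateSpG n → Prop) [DecidablePred Ev] :
    prG n p Ev ≤ c / 9 * ((∑ e, #{ab : Fin 3 × Fin 3 | Ev (e, ab)} : ℕ) : ℝ) := by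
  calc prG n p Ev ≤ ∑ ω : GateSpG n, if Ev ω then c / 9 else 0 := by
        refine sum_le_sum fun ω _ => ?_
        split_ifs
        · linarith [hpc ω.1]
        · rfl
    _ = _ := by
        rw [Fintype.sum_prod_type, Nat.cast_sum, mul_sum]
        refine sum_congr rfl fun e _ => ?_
        rw [← sum_filter, sum_const, nsmul_eq_mul, mul_comm]

end Gates

theorem backflow_close_to_uniform_general (n : ℕ) (hn : 2 ≤ n)
    (p : {e : Fin n × Fin n // e.1 < e.2} → ℝ)
    (hp1 : ∑ e, p e = 1)
    (α : ℝ) (hdom : ∀ e, p e ≤ Real.exp α * (1 / n.choose 2))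
    (Q : Fin n → Fin 4) (w : ℕ) (hw : pweightG Q = w)
    (hden : 0 < 9 * (n.choose 2 : ℝ) - 4 * Real.exp α * w * (3 * n - 2 * w - 1)) :
    prG n p (fun ω => DecaysG Q ω ∧ CommutesG Q ω) / prG n p (CommutesG Q) ≤
      Real.exp α * (w.choose 2 : ℝ) /
        (9 * (n.choose 2 : ℝ) - 4 * Real.exp α * w * (3 * (n : ℝ) - 2 * w - 1)) := by
  subst hw
  set c := Real.exp α * (1 / n.choose 2 : ℝ) with hc
  set K : ℝ := 4 * pweightG Q * (3 * n - 2 * pweightG Q - 1) with hK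
  have hN : (0 : ℝ) < n.choose 2 := by exact_mod_cast Nat.choose_pos hn
  have hdecay : prG n p (fun ω => DecaysG Q ω ∧ CommutesG Q ω) ≤ c / 9 * (pweightG Q).choose 2 := by
    have := prG_le_of_le p hdom (fun ω => DecaysG Q ω ∧ CommutesG Q ω)
    rwa [sum_card_decaysG_and_commutesG] at this
  have hanti : prG n p (fun ω => ¬CommutesG Q ω) ≤ c / 9 * K :=
    (prG_le_of_le p hdom _).trans <| mul_le_mul_of_nonneg_left
      (hK ▸ sum_card_not_commutesG_le Q) (by positivity)
  have hcommute : 1 - c / 9 * K ≤ prG n p (CommutesG Q) := by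
    linarith [prG_add_prG_not p (CommutesG Q)]
  have hbound : 1 - c / 9 * K = (9 * n.choose 2 - Real.exp α * K) / (9 * n.choose 2) := by
    rw [hc]; field_simp
  have hpos : 0 < 1 - c / 9 * K := by
    rw [hbound]; exact div_pos (by linarith) (by positivity)
  calc _ ≤ c / 9 * (pweightG Q).choose 2 / (1 - c / 9 * K) :=
        div_le_div₀ (by positivity) hdecay hpos hcommute
    _ = _ := by
        rw [hbound, hc, hK]; field_simp

/-- Backflow for general close-to-uniform distributions: if `p(e) ≤ e^α / C(n,2)` for
every pair `e`, then for a Pauli string of weight `w` the backflow probability satisfies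
`Pr_p(Decay | Commute) ≤ e^α·C(w,2) / (9·C(n,2) − 4e^α·w(3n − 2w − 1))`, provided the
denominator is positive. -/
theorem backflow_close_to_uniform (n : ℕ) (hn : 2 ≤ n)
    (p : {e : Fin n × Fin n // e.1 < e.2} → ℝ)
    (hp0 : ∀ e, 0 ≤ p e) (hp1 : ∑ e, p e = 1)
    (α : ℝ) (hdom : ∀ e, p e ≤ Real.exp α * (1 / n.choose 2))
    (Q : Fin n → Fin 4) (w : ℕ) (hw : pweightG Q = w)
    (hden : 0 < 9 * (n.choose 2 : ℝ) - 4 * Real.exp α * w * (3 * n - 2 * w - 1)) :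
    prG n p (fun ω => DecaysG Q ω ∧ CommutesG Q ω) / prG n p (CommutesG Q) ≤
      Real.exp α * (w.choose 2 : ℝ) /
        (9 * (n.choose 2 : ℝ) - 4 * Real.exp α * w * (3 * (n : ℝ) - 2 * w - 1)) :=
  backflow_close_to_uniform_general n hn p hp1 α hdom Q w hw hden
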